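/- arXiv:1206.2328 — 3 statements merged into one kernel-verified Lean document; each statement's English description precedes it below -/
import Mathlib

section
/- For any ρ > 0, setting n₀ = ⌊10(ρ+1)²⌋ − 1, the following three conditions hold: (i) n₀ > 3; (ii) exp((ρ²/4)/(n₀+1)) − 1 ≤ 1/2; (iii) 3π·max(1, (ρ/2)^{2n₀+1})/Γ(n₀) + ρ²/(2n₀ − ρ²) + (ρ/2)^{2n₀} e^{ρ²/4}/Γ(n₀) ≤ 1/2. -/
open Real Nat

set_option maxHeartbeats 4000000

lemma pow_div_fact_le_exp {y : ℝ} (hy : 0 ≤ y) (n : ℕ) :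
    y ^ n / (n ! : ℝ) ≤ Real.exp y := by
  calc y ^ n / (n ! : ℝ)
      ≤ ∑ i ∈ Finset.range (n + 1), y ^ i / (i ! : ℝ) :=
        Finset.single_le_sum (f := fun i => y ^ i / (i ! : ℝ))
          (fun i _ => by positivity) (Finset.self_mem_range_succ n)
    _ ≤ Real.exp y := Real.sum_le_exp_of_nonneg hy (n + 1)

/-- The numerical conditions (5.14) hold for `n₀ = ⌊10(ρ+1)²⌋ − 1`, for any `ρ > 0`. -/
theorem stmt_3 (ρ : ℝ) (hρ : 0 < ρ) (n₀ : ℕ) (hn₀ : n₀ = ⌊10 * (ρ + 1) ^ 2⌋₊ - 1) :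
    3 < n₀ ∧
    Real.exp ((ρ ^ 2 / 4) / ((n₀ : ℝ) + 1)) - 1 ≤ 1 / 2 ∧
    3 * Real.pi * max 1 ((ρ / 2) ^ (2 * n₀ + 1)) / Real.Gamma (n₀ : ℝ)
      + ρ ^ 2 / (2 * (n₀ : ℝ) - ρ ^ 2)
      + (ρ / 2) ^ (2 * n₀) * Real.exp (ρ ^ 2 / 4) / Real.Gamma (n₀ : ℝ) ≤ 1 / 2 := by
  have h10 : (10 : ℝ) ≤ 10 * (ρ + 1) ^ 2 := by nlinarith
  have hfl : 10 ≤ ⌊10 * (ρ + 1) ^ 2⌋₊ :=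
    Nat.le_floor (by exact_mod_cast h10)
  have hn9 : 9 ≤ n₀ := by omega
  have hncast : (n₀ : ℝ) = (⌊10 * (ρ + 1) ^ 2⌋₊ : ℝ) - 1 := by
    rw [hn₀, Nat.cast_sub (by omega)]; norm_num
  have hnr : 10 * (ρ + 1) ^ 2 - 2 ≤ (n₀ : ℝ) := by
    have h := Nat.lt_floor_add_one (10 * (ρ + 1) ^ 2)
    rw [hncast]; linarith
  refine ⟨by omega, ?_, ?_⟩
  · -- condition (ii)
    have hd : (0 : ℝ) < (n₀ : ℝ) + 1 := by positivity
    have harg : ρ ^ 2 / 4 / ((n₀ : ℝ) + 1) ≤ 1 / 3 := by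
      rw [div_le_div_iff₀ hd (by norm_num)]
      nlinarith
    have hlog : (1 : ℝ) / 3 ≤ Real.log (3 / 2) := by
      have h := Real.log_le_sub_one_of_pos (show (0 : ℝ) < 2 / 3 by norm_num)
      have h2 : Real.log (3 / 2) = -Real.log (2 / 3) := by
        rw [← Real.log_inv]; norm_num
      rw [h2]; linarith
    have : Real.exp (ρ ^ 2 / 4 / ((n₀ : ℝ) + 1)) ≤ 3 / 2 := by
      calc Real.exp (ρ ^ 2 / 4 / ((n₀ : ℝ) + 1)) ≤ Real.exp (Real.log (3 / 2)) :=
            Real.exp_le_exp.2 (le_trans harg hlog)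
        _ = 3 / 2 := Real.exp_log (by norm_num)
    linarith
  · -- condition (iii)
    obtain ⟨p, hp⟩ : ∃ p, n₀ = p + 1 := ⟨n₀ - 1, by omega⟩
    have hΓ : Real.Gamma (n₀ : ℝ) = (p ! : ℝ) := by
      rw [hp]; push_cast; exact Real.Gamma_nat_eq_factorial p
    have hp8 : 8 ≤ p := by omega
    have hfpos : (0 : ℝ) < (p ! : ℝ) := by positivity
    rw [hΓ]
    rcases le_or_gt ρ 2 with hρ2 | hρ2
    · -- small ρ : ρ ≤ 2
      have hx0 : (0 : ℝ) ≤ ρ / 2 := by linarith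
      have hx1 : ρ / 2 ≤ 1 := by linarith
      have hpow1 : (ρ / 2) ^ (2 * n₀ + 1) ≤ 1 := pow_le_one₀ hx0 hx1
      have hpow2 : (ρ / 2) ^ (2 * n₀) ≤ 1 := pow_le_one₀ hx0 hx1
      have hmax : max 1 ((ρ / 2) ^ (2 * n₀ + 1)) = 1 := max_eq_left hpow1
      have hfact : (40320 : ℝ) ≤ (p ! : ℝ) := by
        have : (8 : ℕ)! ≤ p ! := Nat.factorial_le hp8
        calc (40320 : ℝ) = ((8 : ℕ)! : ℝ) := by norm_num [Nat.factorial]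
          _ ≤ (p ! : ℝ) := by exact_mod_cast this
      have hterm1 : 3 * Real.pi * max 1 ((ρ / 2) ^ (2 * n₀ + 1)) / (p ! : ℝ)
          ≤ 12 / 40320 := by
        rw [hmax]
        exact div_le_div₀ (by norm_num) (by nlinarith [Real.pi_le_four]) (by norm_num) hfact
      have hterm2 : ρ ^ 2 / (2 * (n₀ : ℝ) - ρ ^ 2) ≤ 4 / 14 := by
        have hden : (14 : ℝ) ≤ 2 * (n₀ : ℝ) - ρ ^ 2 := by
          have : (9 : ℝ) ≤ (n₀ : ℝ) := by exact_mod_cast hn9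
          nlinarith
        exact div_le_div₀ (by norm_num) (by nlinarith) (by norm_num) hden
      have hexp : Real.exp (ρ ^ 2 / 4) ≤ 3 := by
        have h1 : Real.exp (ρ ^ 2 / 4) ≤ Real.exp 1 := Real.exp_le_exp.2 (by nlinarith)
        linarith [Real.exp_one_lt_d9]
      have hterm3 : (ρ / 2) ^ (2 * n₀) * Real.exp (ρ ^ 2 / 4) / (p ! : ℝ) ≤ 3 / 40320 := by
        refine div_le_div₀ (by norm_num) ?_ (by norm_num) hfact
        calc (ρ / 2) ^ (2 * n₀) * Real.exp (ρ ^ 2 / 4) ≤ 1 * 3 := by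
              apply mul_le_mul hpow2 hexp (Real.exp_pos _).le zero_le_one
          _ = 3 := by norm_num
      linarith
    · -- large ρ : 2 < ρ
      set x : ℝ := ρ / 2 with hxdef
      have hx1 : 1 < x := by rw [hxdef]; linarith
      have hx0 : (0 : ℝ) < x := by linarith
      have hnx : 40 * x ^ 2 + 40 * x + 8 ≤ (n₀ : ℝ) := by
        have : ρ = 2 * x := by rw [hxdef]; ring
        rw [this] at hnr; nlinarith [hnr]
      -- the maximum is the power
      have hmax : max 1 (x ^ (2 * n₀ + 1)) = x ^ (2 * n₀ + 1) :=
        max_eq_right (one_le_pow₀ hx1.le)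
      rw [hmax]
      -- set k = ceil of 2x², m the rest
      set k : ℕ := ⌈2 * x ^ 2⌉₊ with hkdef
      have hk1 : 2 * x ^ 2 ≤ (k : ℝ) := Nat.le_ceil _
      have hk2 : (k : ℝ) < 2 * x ^ 2 + 1 := Nat.ceil_lt_add_one (by positivity)
      have hkp : k ≤ p := by
        have : (k : ℝ) ≤ (p : ℝ) := by
          have hpcast : (p : ℝ) = (n₀ : ℝ) - 1 := by rw [hp]; push_cast; ring
          rw [hpcast]; nlinarith
        exact_mod_cast this
      set m : ℕ := p - k with hmdef
      have hkm : k + m = p := by omega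
      have hmr : 38 * x ^ 2 + 6 ≤ (m : ℝ) := by
        have hmcast : (m : ℝ) = (p : ℝ) - (k : ℝ) := by
          rw [hmdef, Nat.cast_sub hkp]
        have hpcast : (p : ℝ) = (n₀ : ℝ) - 1 := by rw [hp]; push_cast; ring
        rw [hmcast, hpcast]; linarith
      -- factorial lower bound
      have hfact : (k ! : ℝ) * (2 * x ^ 2) ^ m ≤ (p ! : ℝ) := by
        have h1 : k ! * (k + 1) ^ m ≤ (k + m)! := Nat.factorial_mul_pow_le_factorial
        have h2 : ((k ! * (k + 1) ^ m : ℕ) : ℝ) ≤ ((k + m)! : ℝ) := by exact_mod_cast h1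
        rw [hkm] at h2
        calc (k ! : ℝ) * (2 * x ^ 2) ^ m ≤ (k ! : ℝ) * ((k : ℝ) + 1) ^ m := by
              apply mul_le_mul_of_nonneg_left _ (by positivity)
              exact pow_le_pow_left₀ (by positivity) (by linarith) m
          _ ≤ (p ! : ℝ) := by push_cast at h2 ⊢; linarith
      have hkfpos : (0 : ℝ) < (k ! : ℝ) := by positivity
      have hdenpos : (0 : ℝ) < (k ! : ℝ) * (2 * x ^ 2) ^ m := by positivity
      -- key bound on x^(2n₀)/p!
      have hsplit : x ^ (2 * n₀) = x ^ 2 * (x ^ 2) ^ k * (x ^ 2) ^ m := by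
        rw [← pow_mul, ← pow_mul, ← pow_add, ← pow_add]
        congr 1; omega
      have hT : x ^ (2 * n₀) / (p ! : ℝ) ≤ x ^ 2 * Real.exp (x ^ 2) * (1 / 2) ^ m := by
        calc x ^ (2 * n₀) / (p ! : ℝ)
            ≤ x ^ (2 * n₀) / ((k ! : ℝ) * (2 * x ^ 2) ^ m) :=
              div_le_div_of_nonneg_left (by positivity) hdenpos hfact
          _ = x ^ 2 * ((x ^ 2) ^ k / (k ! : ℝ)) * (1 / 2) ^ m := by
              rw [hsplit, mul_pow, one_div, inv_pow]
              field_simp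
          _ ≤ x ^ 2 * Real.exp (x ^ 2) * (1 / 2) ^ m := by
              apply mul_le_mul_of_nonneg_right _ (by positivity)
              exact mul_le_mul_of_nonneg_left (pow_div_fact_le_exp (by positivity) k)
                (by positivity)
      -- bounds x² ≤ exp(x²), x ≤ exp(x²)
      have hxe : x ^ 2 ≤ Real.exp (x ^ 2) := by
        have := Real.add_one_le_exp (x ^ 2); linarith
      have hxe2 : x ≤ Real.exp (x ^ 2) := by nlinarith
      have hepos : (0 : ℝ) < Real.exp (x ^ 2) := Real.exp_pos _
      have hhalfpos : (0 : ℝ) < ((1 : ℝ) / 2) ^ m := by positivity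
      -- terms 1 and 3
      have hterm1 : 3 * Real.pi * x ^ (2 * n₀ + 1) / (p ! : ℝ)
          ≤ 12 * Real.exp (x ^ 2) ^ 3 * (1 / 2) ^ m := by
        have : 3 * Real.pi * x ^ (2 * n₀ + 1) / (p ! : ℝ)
            = 3 * Real.pi * x * (x ^ (2 * n₀) / (p ! : ℝ)) := by
          rw [pow_succ]; field_simp
        rw [this]
        have h3px : 3 * Real.pi * x ≤ 12 * Real.exp (x ^ 2) := by
          nlinarith [Real.pi_le_four, Real.pi_pos]
        calc 3 * Real.pi * x * (x ^ (2 * n₀) / (p ! : ℝ))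
            ≤ 12 * Real.exp (x ^ 2) * (x ^ 2 * Real.exp (x ^ 2) * (1 / 2) ^ m) := by
              apply mul_le_mul h3px hT (by positivity) (by positivity)
          _ ≤ 12 * Real.exp (x ^ 2) * (Real.exp (x ^ 2) * Real.exp (x ^ 2) * (1 / 2) ^ m) := by
              apply mul_le_mul_of_nonneg_left _ (by positivity)
              apply mul_le_mul_of_nonneg_right _ (by positivity)
              exact mul_le_mul_of_nonneg_right hxe hepos.le
          _ = 12 * Real.exp (x ^ 2) ^ 3 * (1 / 2) ^ m := by ring
      have hterm3 : x ^ (2 * n₀) * Real.exp (x ^ 2) / (p ! : ℝ)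
          ≤ Real.exp (x ^ 2) ^ 3 * (1 / 2) ^ m := by
        have heq : x ^ (2 * n₀) * Real.exp (x ^ 2) / (p ! : ℝ)
            = Real.exp (x ^ 2) * (x ^ (2 * n₀) / (p ! : ℝ)) := by ring
        rw [heq]
        calc Real.exp (x ^ 2) * (x ^ (2 * n₀) / (p ! : ℝ))
            ≤ Real.exp (x ^ 2) * (x ^ 2 * Real.exp (x ^ 2) * (1 / 2) ^ m) :=
              mul_le_mul_of_nonneg_left hT hepos.le
          _ ≤ Real.exp (x ^ 2) * (Real.exp (x ^ 2) * Real.exp (x ^ 2) * (1 / 2) ^ m) := by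
              apply mul_le_mul_of_nonneg_left _ hepos.le
              apply mul_le_mul_of_nonneg_right _ (by positivity)
              exact mul_le_mul_of_nonneg_right hxe hepos.le
          _ = Real.exp (x ^ 2) ^ 3 * (1 / 2) ^ m := by ring
      -- the combined exponential bound: 13 exp(3x²) (1/2)^m ≤ 1/4
      have hkey : 13 * Real.exp (x ^ 2) ^ 3 * (1 / 2) ^ m ≤ 1 / 4 := by
        have he3 : Real.exp (x ^ 2) ^ 3 = Real.exp (3 * x ^ 2) := by
          rw [← Real.exp_nat_mul]; norm_num
        have h2m : ((1 : ℝ) / 2) ^ m = Real.exp (-(m * Real.log 2)) := by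
          rw [Real.exp_neg, Real.exp_nat_mul, Real.exp_log (by norm_num : (0:ℝ) < 2)]
          rw [one_div, inv_pow]
        rw [he3, h2m, mul_assoc, ← Real.exp_add]
        have harg : 3 * x ^ 2 + -(↑m * Real.log 2) ≤ -4 := by
          have hl2 : 0.6931471803 < Real.log 2 := Real.log_two_gt_d9
          have hx2 : 1 < x ^ 2 := by nlinarith
          nlinarith [hmr]
        calc 13 * Real.exp (3 * x ^ 2 + -(↑m * Real.log 2)) ≤ 13 * Real.exp (-4) :=
              mul_le_mul_of_nonneg_left (Real.exp_le_exp.2 harg) (by norm_num)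
          _ ≤ 1 / 4 := by
              have h4 : Real.exp (4 : ℝ) = Real.exp 1 ^ (4 : ℕ) := by
                rw [← Real.exp_nat_mul]; norm_num
              have he1 : (2.71 : ℝ) < Real.exp 1 := by linarith [Real.exp_one_gt_d9]
              have he4 : (52 : ℝ) < Real.exp (4 : ℝ) := by
                rw [h4]
                calc (52 : ℝ) < 2.71 ^ (4 : ℕ) := by norm_num
                  _ < Real.exp 1 ^ (4 : ℕ) := by
                    exact pow_lt_pow_left₀ he1 (by norm_num) (by norm_num)
              have hepos4 : (0 : ℝ) < Real.exp (4 : ℝ) := Real.exp_pos _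
              have hneg : Real.exp (-4 : ℝ) = (Real.exp (4 : ℝ))⁻¹ := Real.exp_neg 4
              have hinv : Real.exp (-4 : ℝ) * Real.exp (4 : ℝ) = 1 := by
                rw [hneg, inv_mul_cancel₀ hepos4.ne']
              nlinarith [Real.exp_pos (-4 : ℝ)]
      -- term 2
      have hterm2 : ρ ^ 2 / (2 * (n₀ : ℝ) - ρ ^ 2) ≤ 1 / 19 := by
        have hρx : ρ ^ 2 = 4 * x ^ 2 := by rw [hxdef]; ring
        have hden : 76 * x ^ 2 ≤ 2 * (n₀ : ℝ) - ρ ^ 2 := by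
          rw [hρx]; nlinarith
        calc ρ ^ 2 / (2 * (n₀ : ℝ) - ρ ^ 2) ≤ 4 * x ^ 2 / (76 * x ^ 2) :=
              div_le_div₀ (by positivity) (by rw [hρx]) (by positivity) hden
          _ = 1 / 19 := by field_simp; ring
      -- finish
      have hρ4 : ρ ^ 2 / 4 = x ^ 2 := by rw [hxdef]; ring
      rw [hρ4]
      linarith
end

section
/- For any complex z with |z| ≤ ρ and any α = n + (d−2)/2 with d ≥ 2 an integer and n ≥ 10(ρ+1)² an integer, the Bessel function of the first kind satisfies (1/2)·(|z|/2)^α/Γ(α+1) ≤ |J_α(z)| ≤ (3/2)·(|z|/2)^α/Γ(α+1). -/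
/-!
Pulling out the leading power, `J_α(z) = (z/2)^α ∑ₘ cₘ` with `c₀ = 1/Γ(α+1)` and
`|cₘ| = (|z|/2)^{2m} / (m! Γ(m+α+1)) ≤ qᵐ / Γ(α+1)`, where `q = |z|²/(4α)`, because
`Γ(m+α+1) ≥ αᵐ Γ(α+1)`. As `α ≥ n - 1 ≥ 10(ρ+1)² - 1`, we have `q ≤ 1/3`, so the terms after
the first add up to at most `q/(1-q) ≤ 1/2` times the first one.
-/

/-- The Bessel function of the first kind of order `α`,
`J_α(z) = Σ_{m≥0} (−1)^m (z/2)^{2m+α} / (Γ(m+1) Γ(m+α+1))`. -/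
noncomputable def besselJ (α : ℝ) (z : ℂ) : ℂ :=
  ∑' m : ℕ, ((-1) ^ m / (Complex.Gamma (m + 1) * Complex.Gamma ((m : ℂ) + (α : ℂ) + 1)))
      * (z / 2) ^ ((2 * m : ℕ) + (α : ℂ))

noncomputable def besselJReducedTerm (α : ℝ) (z : ℂ) (m : ℕ) : ℂ :=
  (-1) ^ m / (Complex.Gamma (m + 1) * Complex.Gamma ((m : ℂ) + (α : ℂ) + 1)) * (z / 2) ^ (2 * m)

theorem Real.pow_mul_Gamma_add_one_le_Gamma {α : ℝ} (hα : 0 ≤ α) (m : ℕ) :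
    α ^ m * Real.Gamma (α + 1) ≤ Real.Gamma (m + α + 1) := by
  induction m with
  | zero => simp
  | succ m ih =>
    have hpos : 0 < (m : ℝ) + α + 1 := by positivity
    calc α ^ (m + 1) * Real.Gamma (α + 1) = α * (α ^ m * Real.Gamma (α + 1)) := by ring
      _ ≤ (m + α + 1) * Real.Gamma (m + α + 1) := by
        gcongr
        linarith
      _ = Real.Gamma ((m + 1 : ℕ) + α + 1) := by
        rw [← Real.Gamma_add_one hpos.ne']; push_cast; ring_nf

theorem norm_tsum_sub_zero_le_of_norm_le_geometric {E : Type*} [NormedAddCommGroup E]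
    [CompleteSpace E] {f : ℕ → E} {C q : ℝ} (hq₀ : 0 ≤ q) (hq₁ : q < 1)
    (hf : ∀ m, ‖f m‖ ≤ C * q ^ m) :
    ‖∑' m, f m - f 0‖ ≤ C * q / (1 - q) := by
  have hgeom := (hasSum_geometric_of_lt_one hq₀ hq₁).mul_left (C * q)
  have hsum : Summable f :=
    .of_norm_bounded ((summable_geometric_of_lt_one hq₀ hq₁).mul_left C) hf
  rw [hsum.tsum_eq_zero_add, add_sub_cancel_left, div_eq_mul_inv]
  refine tsum_of_norm_bounded hgeom fun m => (hf (m + 1)).trans_eq ?_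
  ring

theorem besselJ_eq_cpow_mul_tsum {z : ℂ} (hz : z ≠ 0) (α : ℝ) :
    besselJ α z = (z / 2) ^ (α : ℂ) * ∑' m, besselJReducedTerm α z m := by
  rw [besselJ, ← tsum_mul_left]
  congr 1 with m
  rw [Complex.cpow_add _ _ (div_ne_zero hz two_ne_zero), Complex.cpow_natCast,
    besselJReducedTerm]
  ring

theorem besselJ_zero_right {α : ℝ} (hα : 0 < α) : besselJ α 0 = 0 := by
  have hexp (m : ℕ) : 2 * (m : ℂ) + α ≠ 0 := by
    exact_mod_cast (by positivity : (0 : ℝ) < 2 * m + α).ne'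
  simp [besselJ, Complex.zero_cpow, hexp]

theorem norm_besselJ {α : ℝ} (hα : 0 < α) (z : ℂ) :
    ‖besselJ α z‖ = (‖z‖ / 2) ^ α * ‖∑' m, besselJReducedTerm α z m‖ := by
  rcases eq_or_ne z 0 with rfl | hz
  · simp [besselJ_zero_right hα, Real.zero_rpow hα.ne']
  · rw [besselJ_eq_cpow_mul_tsum hz, norm_mul, Complex.norm_cpow_real, norm_div,
      Complex.norm_two]

theorem besselJReducedTerm_zero (α : ℝ) (z : ℂ) :
    besselJReducedTerm α z 0 = ((Real.Gamma (α + 1))⁻¹ : ℝ) := by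
  simp [besselJReducedTerm, ← Complex.Gamma_ofReal]

theorem norm_besselJReducedTerm_le {α : ℝ} (hα : 0 < α) (z : ℂ) (m : ℕ) :
    ‖besselJReducedTerm α z m‖ ≤ (Real.Gamma (α + 1))⁻¹ * (‖z‖ ^ 2 / (4 * α)) ^ m := by
  have hΓ : Complex.Gamma ((m : ℂ) + (α : ℂ) + 1) = Real.Gamma (m + α + 1) := by
    rw [← Complex.Gamma_ofReal]; push_cast; rfl
  have hΓm : 0 < Real.Gamma (m + α + 1) := Real.Gamma_pos_of_pos (by positivity)
  have hΓle : α ^ m * Real.Gamma (α + 1) ≤ m.factorial * Real.Gamma (m + α + 1) :=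
    (Real.pow_mul_Gamma_add_one_le_Gamma hα.le m).trans <|
      le_mul_of_one_le_left hΓm.le (by exact_mod_cast m.factorial_pos)
  rw [besselJReducedTerm, Complex.Gamma_nat_eq_factorial, hΓ]
  simp only [norm_mul, norm_div, norm_pow, norm_neg, norm_one, one_pow, Complex.norm_natCast,
    Complex.norm_real, Real.norm_eq_abs, abs_of_pos hΓm, Complex.norm_two]
  calc 1 / (m.factorial * Real.Gamma (m + α + 1)) * (‖z‖ / 2) ^ (2 * m)
      ≤ 1 / (α ^ m * Real.Gamma (α + 1)) * (‖z‖ / 2) ^ (2 * m) := by gcongr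
    _ = (Real.Gamma (α + 1))⁻¹ * (‖z‖ ^ 2 / (4 * α)) ^ m := by
      rw [pow_mul, div_pow, div_pow, div_pow, mul_pow]; field_simp; norm_num

theorem norm_tsum_besselJReducedTerm_sub_le {α : ℝ} (hα : 0 < α) {z : ℂ}
    (hz : 3 * ‖z‖ ^ 2 ≤ 4 * α) :
    |‖∑' m, besselJReducedTerm α z m‖ - (Real.Gamma (α + 1))⁻¹|
      ≤ (Real.Gamma (α + 1))⁻¹ / 2 := by
  set q := ‖z‖ ^ 2 / (4 * α)
  have hq₀ : 0 ≤ q := by positivity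
  have hq : q ≤ 1 / 3 := by
    rw [div_le_iff₀ (by positivity)]; linarith
  have hΓ₀ : 0 < (Real.Gamma (α + 1))⁻¹ := inv_pos.2 (Real.Gamma_pos_of_pos (by positivity))
  have hterm₀ : ‖besselJReducedTerm α z 0‖ = (Real.Gamma (α + 1))⁻¹ := by
    rw [besselJReducedTerm_zero, Complex.norm_real, Real.norm_of_nonneg hΓ₀.le]
  calc |‖∑' m, besselJReducedTerm α z m‖ - (Real.Gamma (α + 1))⁻¹|
      ≤ ‖∑' m, besselJReducedTerm α z m - besselJReducedTerm α z 0‖ := by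
        rw [← hterm₀]; exact abs_norm_sub_norm_le _ _
    _ ≤ (Real.Gamma (α + 1))⁻¹ * q / (1 - q) :=
        norm_tsum_sub_zero_le_of_norm_le_geometric hq₀ (by linarith)
          (norm_besselJReducedTerm_le hα z)
    _ ≤ (Real.Gamma (α + 1))⁻¹ / 2 := by
        rw [div_le_div_iff₀ (by linarith) two_pos]; nlinarith

theorem besselJ_norm_bounds {α : ℝ} (hα : 0 < α) {z : ℂ} (hz : 3 * ‖z‖ ^ 2 ≤ 4 * α) :
    (1 / 2) * (‖z‖ / 2) ^ α / Real.Gamma (α + 1) ≤ ‖besselJ α z‖ ∧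
      ‖besselJ α z‖ ≤ (3 / 2) * (‖z‖ / 2) ^ α / Real.Gamma (α + 1) := by
  have hS := abs_le.1 (norm_tsum_besselJReducedTerm_sub_le hα hz)
  have hpow : 0 ≤ (‖z‖ / 2) ^ α := by positivity
  rw [norm_besselJ hα]
  constructor
  · calc _ = (‖z‖ / 2) ^ α * ((Real.Gamma (α + 1))⁻¹ / 2) := by ring
      _ ≤ _ := by gcongr; linarith
  · calc _ ≤ (‖z‖ / 2) ^ α * (3 / 2 * (Real.Gamma (α + 1))⁻¹) := by gcongr; linarith
      _ = _ := by ring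

theorem stmt_4_general (ρ : ℝ) (d n : ℕ)
    (hn : 10 * (ρ + 1) ^ 2 ≤ (n : ℝ)) (z : ℂ) (hz : ‖z‖ ≤ ρ)
    (α : ℝ) (hα : α = (n : ℝ) + ((d : ℝ) - 2) / 2) :
    (1 / 2) * (‖z‖ / 2) ^ α / Real.Gamma (α + 1) ≤ ‖besselJ α z‖ ∧
      ‖besselJ α z‖ ≤ (3 / 2) * (‖z‖ / 2) ^ α / Real.Gamma (α + 1) := by
  have hαn : (n : ℝ) - 1 ≤ α := by rw [hα]; linarith [(d.cast_nonneg : (0 : ℝ) ≤ d)]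
  have hρ₀ : 0 ≤ ρ := (norm_nonneg z).trans hz
  exact besselJ_norm_bounds (by nlinarith) (by nlinarith [norm_nonneg z])

/-- Bessel estimate (5.15): for `|z| ≤ ρ`, `α = n + (d−2)/2`, `d ≥ 2`,
`n ≥ 10(ρ+1)²`, one has `(1/2)(|z|/2)^α/Γ(α+1) ≤ |J_α(z)| ≤ (3/2)(|z|/2)^α/Γ(α+1)`. -/
theorem stmt_4 (ρ : ℝ) (hρ : 0 < ρ) (d n : ℕ) (hd : 2 ≤ d)
    (hn : 10 * (ρ + 1) ^ 2 ≤ (n : ℝ)) (z : ℂ) (hz : ‖z‖ ≤ ρ)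
    (α : ℝ) (hα : α = (n : ℝ) + ((d : ℝ) - 2) / 2) :
    (1 / 2) * (‖z‖ / 2) ^ α / Real.Gamma (α + 1) ≤ ‖besselJ α z‖ ∧
      ‖besselJ α z‖ ≤ (3 / 2) * (‖z‖ / 2) ^ α / Real.Gamma (α + 1) :=
  stmt_4_general ρ d n hn z hz α hα
end

section
/- For any complex z with |z| ≤ ρ and any α = n + (d−2)/2 with d ≥ 2 an integer and n ≥ 10(ρ+1)² an integer, the derivative of the Bessel function of the first kind satisfies |J'_α(z)| ≤ 3·(|z|/2)^{α−1}/Γ(α). -/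
/-!
Factor `J_α(z) = (z/2)^α G(z)` with `G(z) = Σ c_m (z/2)^{2m}` entire. Since
`Γ(m+α+1) ≥ α^m Γ(α+1)`, for `‖z‖² < α` the terms of `G` and of
`(α/2) G + (z/2) G' = Σ c_m (α/2 + m) (z/2)^{2m}` are dominated by a geometric series of ratio
`1/4`. This gives `G(z) ≠ 0` and `|J'_α(z)| = (|z|/2)^{α-1} |(α/2) G + (z/2) G'| ≤
2 (|z|/2)^{α-1} / Γ(α)` wherever the principal branch of `(z/2)^α` is differentiable. On the
negative real axis with `α ∉ ℤ` it is not even continuous, and since `G ≠ 0` neither is `J_α`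
differentiable, so `deriv` is `0` there; at `z = 0` the factor `(z/2)^α` with `α > 1` has
derivative `0`.
-/

open Complex Filter Topology
open scoped Nat

lemma hasDerivAt_cpow_const_of_mem_slitPlane_or_int {s z : ℂ} (hz : z ≠ 0)
    (h : z ∈ slitPlane ∨ ∃ k : ℤ, s = k) :
    HasDerivAt (fun w : ℂ => w ^ s) (s * z ^ (s - 1)) z := by
  rcases h with h | ⟨k, rfl⟩
  · exact (hasStrictDerivAt_cpow_const h).hasDerivAt
  · have hsub : ((k : ℂ) - 1) = ((k - 1 : ℤ) : ℂ) := by push_cast; ring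
    simp_rw [cpow_intCast, hsub, cpow_intCast]
    exact hasDerivAt_zpow k z (Or.inl hz)

lemma mem_slitPlane_or_exists_int_of_continuousAt_cpow_const {s z : ℂ} (hz : z ≠ 0)
    (h : ContinuousAt (fun w : ℂ => w ^ s) z) : z ∈ slitPlane ∨ ∃ k : ℤ, s = k := by
  by_contra! hcon
  obtain ⟨hslit, hs⟩ := hcon
  obtain ⟨hre, him⟩ : z.re < 0 ∧ z.im = 0 := by
    rw [← arg_eq_pi_iff]
    by_contra harg
    exact hslit (mem_slitPlane_iff_arg.mpr ⟨harg, hz⟩)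
  have : (𝓝[{w : ℂ | w.im < 0}] z).NeBot := by
    rw [← mem_closure_iff_nhdsWithin_neBot, closure_setOfPred_im_lt]
    simp [him]
  -- Approaching `z` from below, `log w` tends to `log ‖z‖ - π i`, whereas `log z = log ‖z‖ + π i`.
  have hbelow : Tendsto (fun w : ℂ => w ^ s) (𝓝[{w : ℂ | w.im < 0}] z)
      (𝓝 (exp ((Real.log ‖z‖ - Real.pi * I) * s))) := by
    refine ((continuous_exp.tendsto _).comp
      ((tendsto_log_nhdsWithin_im_neg_of_re_neg_of_im_zero hre him).mul_const s)).congr' ?_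
    filter_upwards [nhdsWithin_le_nhds (eventually_ne_nhds hz)] with w hw
    rw [cpow_def_of_ne_zero hw]
    rfl
  have hval := tendsto_nhds_unique (h.tendsto.mono_left nhdsWithin_le_nhds) hbelow
  rw [cpow_def_of_ne_zero hz, log, arg_eq_pi_iff.mpr ⟨hre, him⟩, exp_eq_exp_iff_exists_int] at hval
  obtain ⟨k, hk⟩ := hval
  apply hs k
  have h2pi : (2 * Real.pi * I : ℂ) ≠ 0 := by simp [Real.pi_ne_zero, I_ne_zero]
  apply mul_left_cancel₀ h2pi
  linear_combination hk

lemma hasDerivAt_cpow_ofReal_zero {p : ℝ} (hp : 1 < p) :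
    HasDerivAt (fun w : ℂ => w ^ (p : ℂ)) 0 0 := by
  have hp0 : (p : ℂ) ≠ 0 := ofReal_ne_zero.mpr (by linarith)
  rw [hasDerivAt_iff_isLittleO, zero_cpow hp0]
  simp only [sub_zero, smul_zero]
  have hlim : Tendsto (fun w : ℂ => ‖w‖ ^ (p - 1)) (𝓝 0) (𝓝 0) := by
    have := (continuous_norm.tendsto (0 : ℂ)).rpow_const (p := p - 1) (Or.inr (by linarith))
    rwa [norm_zero, Real.zero_rpow (by linarith)] at this
  refine Asymptotics.isLittleO_iff.mpr fun c hc => ?_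
  filter_upwards [hlim.eventually (ge_mem_nhds hc)] with w hw
  rw [norm_cpow_real, show p = (p - 1) + 1 by ring, Real.rpow_add' (norm_nonneg w) (by linarith),
    Real.rpow_one]
  exact mul_le_mul_of_nonneg_right hw (norm_nonneg w)

lemma Real.Gamma_add_one_mul_pow_le {α : ℝ} (hα : 0 < α) (m : ℕ) :
    Real.Gamma (α + 1) * α ^ m ≤ Real.Gamma (m + α + 1) := by
  induction m with
  | zero => simp
  | succ m ih =>
    have hΓ : 0 ≤ Real.Gamma (m + α + 1) := (Real.Gamma_pos_of_pos (by positivity)).le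
    calc Real.Gamma (α + 1) * α ^ (m + 1) = α * (Real.Gamma (α + 1) * α ^ m) := by ring
      _ ≤ (m + α + 1) * Real.Gamma (m + α + 1) := by gcongr; linarith [m.cast_nonneg (α := ℝ)]
      _ = Real.Gamma ((m + 1 : ℕ) + α + 1) := by
        rw [← Real.Gamma_add_one (by positivity)]; push_cast; ring_nf

noncomputable def besselCoef (α : ℝ) (m : ℕ) : ℂ :=
  (-1) ^ m / (Complex.Gamma (m + 1) * Complex.Gamma ((m : ℂ) + (α : ℂ) + 1))

noncomputable def besselJEntire (α : ℝ) (z : ℂ) : ℂ :=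
  ∑' m : ℕ, besselCoef α m * (z / 2) ^ (2 * m)

section

variable {α : ℝ}

lemma besselJ_eq_cpow_mul (hα : 0 < α) (z : ℂ) :
    besselJ α z = (z / 2) ^ (α : ℂ) * besselJEntire α z := by
  rcases eq_or_ne z 0 with rfl | hz
  · have hexp (m : ℕ) : ((2 * m : ℕ) : ℂ) + (α : ℂ) ≠ 0 := by
      rw [← ofReal_natCast, ← ofReal_add, ofReal_ne_zero]; positivity
    simp only [besselJ, zero_div, zero_cpow (hexp _), mul_zero, tsum_zero,
      zero_cpow (ofReal_ne_zero.mpr hα.ne'), zero_mul]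
  · have hz2 : z / 2 ≠ 0 := div_ne_zero hz two_ne_zero
    rw [besselJEntire, ← tsum_mul_left, besselJ]
    congr 1 with m
    rw [cpow_add _ _ hz2, cpow_natCast, besselCoef]
    ring

lemma norm_besselCoef (hα : 0 < α) (m : ℕ) :
    ‖besselCoef α m‖ = 1 / (m ! * Real.Gamma (m + α + 1)) := by
  have hΓ : Complex.Gamma ((m : ℂ) + (α : ℂ) + 1) = (Real.Gamma (m + α + 1) : ℂ) := by
    rw [← Complex.Gamma_ofReal]; push_cast; rfl
  rw [besselCoef, Complex.Gamma_nat_eq_factorial, hΓ, norm_div, norm_mul, norm_pow, norm_neg,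
    norm_one, one_pow, norm_natCast, norm_real, Real.norm_of_nonneg
      (Real.Gamma_pos_of_pos (by positivity)).le]

lemma norm_besselCoef_mul_le (hα : 0 < α) {w : ℂ} (hw : ‖w‖ ^ 2 ≤ α) (m : ℕ) :
    ‖besselCoef α m‖ * (‖w‖ / 2) ^ (2 * m) ≤ (1 / 4) ^ m / (m ! * Real.Gamma (α + 1)) := by
  have hΓ : 0 < Real.Gamma (α + 1) := Real.Gamma_pos_of_pos (by positivity)
  calc ‖besselCoef α m‖ * (‖w‖ / 2) ^ (2 * m)
      = (‖w‖ ^ 2 / 4) ^ m / (m ! * Real.Gamma (m + α + 1)) := by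
        rw [norm_besselCoef hα, pow_mul]; ring
    _ ≤ (α / 4) ^ m / (m ! * (Real.Gamma (α + 1) * α ^ m)) := by
        gcongr
        exact Real.Gamma_add_one_mul_pow_le hα m
    _ = (1 / 4) ^ m / (m ! * Real.Gamma (α + 1)) := by
        rw [div_pow, div_pow, one_pow]; field_simp

lemma norm_besselCoef_mul_pow_le (hα : 0 < α) {w : ℂ} (hw : ‖w‖ ^ 2 ≤ α) (m : ℕ) :
    ‖besselCoef α m * (w / 2) ^ (2 * m)‖ ≤ (1 / 4) ^ m / Real.Gamma (α + 1) := by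
  rw [norm_mul, norm_pow, norm_div, Complex.norm_two]
  refine (norm_besselCoef_mul_le hα hw m).trans ?_
  have hΓ : 0 < Real.Gamma (α + 1) := Real.Gamma_pos_of_pos (by positivity)
  gcongr
  exact le_mul_of_one_le_left hΓ.le (mod_cast m.factorial_pos)

lemma summable_quarter_pow_div (c : ℝ) : Summable (fun m : ℕ => (1 / 4 : ℝ) ^ m / c) :=
  (summable_geometric_of_lt_one (by norm_num) (by norm_num)).div_const c

lemma hasSum_besselJEntire (hα : 0 < α) {z : ℂ} (hz : ‖z‖ ^ 2 ≤ α) :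
    HasSum (fun m => besselCoef α m * (z / 2) ^ (2 * m)) (besselJEntire α z) :=
  (Summable.of_norm_bounded (summable_quarter_pow_div _)
    (norm_besselCoef_mul_pow_le hα hz)).hasSum

lemma sq_norm_le_of_mem_ball_sqrt {w : ℂ} (hw : w ∈ Metric.ball 0 √α) : ‖w‖ ^ 2 ≤ α :=
  ((Real.lt_sqrt (norm_nonneg w)).mp (mem_ball_zero_iff.mp hw)).le

lemma differentiableOn_besselJEntire (hα : 0 < α) :
    DifferentiableOn ℂ (besselJEntire α) (Metric.ball 0 √α) :=
  differentiableOn_tsum_of_summable_norm (summable_quarter_pow_div _) (fun _ => by fun_prop)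
    Metric.isOpen_ball fun m _ hw =>
      norm_besselCoef_mul_pow_le hα (sq_norm_le_of_mem_ball_sqrt hw) m

lemma differentiableAt_besselJEntire (hα : 0 < α) {z : ℂ} (hz : z ∈ Metric.ball 0 √α) :
    DifferentiableAt ℂ (besselJEntire α) z :=
  (differentiableOn_besselJEntire hα).differentiableAt (Metric.isOpen_ball.mem_nhds hz)

lemma half_mul_deriv_half_pow (k : ℕ) (z : ℂ) :
    z / 2 * deriv (fun w : ℂ => (w / 2) ^ k) z = k / 2 * (z / 2) ^ k := by
  rw [(((hasDerivAt_id' z).div_const 2).fun_pow k).deriv]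
  cases k with
  | zero => simp
  | succ k => rw [Nat.add_sub_cancel, pow_succ]; ring

lemma hasSum_besselJEntire_add_deriv (hα : 0 < α) {z : ℂ} (hz : z ∈ Metric.ball 0 √α) :
    HasSum (fun m => besselCoef α m * ((α / 2 + m) * (z / 2) ^ (2 * m)))
      (α / 2 * besselJEntire α z + z / 2 * deriv (besselJEntire α) z) := by
  have hderiv := hasSum_deriv_of_summable_norm (summable_quarter_pow_div _)
    (fun _ => by fun_prop) Metric.isOpen_ball
    (fun m _ hw => norm_besselCoef_mul_pow_le hα (sq_norm_le_of_mem_ball_sqrt hw) m) hz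
  refine (((hasSum_besselJEntire hα (sq_norm_le_of_mem_ball_sqrt hz)).mul_left (α / 2 : ℂ)).add
    (hderiv.mul_left (z / 2))).congr_fun fun m => ?_
  rw [deriv_const_mul_field, mul_left_comm (z / 2), half_mul_deriv_half_pow]
  push_cast
  ring

lemma norm_besselJEntire_add_deriv_le (hα : 1 ≤ α) {z : ℂ} (hz : z ∈ Metric.ball 0 √α) :
    ‖α / 2 * besselJEntire α z + z / 2 * deriv (besselJEntire α) z‖ ≤ 2 / Real.Gamma α := by
  have hα0 : 0 < α := by linarith
  have hΓ : 0 < Real.Gamma α := Real.Gamma_pos_of_pos hα0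
  have hgeom : HasSum (fun m : ℕ => 3 / 2 / Real.Gamma α * (1 / 4) ^ m) (2 / Real.Gamma α) := by
    have h := (hasSum_geometric_of_lt_one (r := 1 / 4) (by norm_num) (by norm_num)).mul_left
      (3 / 2 / Real.Gamma α)
    rwa [show 3 / 2 / Real.Gamma α * (1 - 1 / 4)⁻¹ = 2 / Real.Gamma α by ring] at h
  refine (hasSum_besselJEntire_add_deriv hα0 hz).norm_le_of_bounded hgeom fun m => ?_
  have hcast : (α / 2 + m : ℂ) = ((α / 2 + m : ℝ) : ℂ) := by push_cast; rfl
  have hm : (m : ℝ) ≤ m ! := mod_cast m.self_le_factorial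
  have hm1 : (1 : ℝ) ≤ m ! := mod_cast m.factorial_pos
  calc ‖besselCoef α m * ((α / 2 + m) * (z / 2) ^ (2 * m))‖
      = (α / 2 + m) * (‖besselCoef α m‖ * (‖z‖ / 2) ^ (2 * m)) := by
        rw [hcast, norm_mul, norm_mul, norm_real, Real.norm_of_nonneg (by positivity), norm_pow,
          norm_div, Complex.norm_two]
        ring
    _ ≤ (α / 2 + m) * ((1 / 4) ^ m / (m ! * Real.Gamma (α + 1))) := by
        gcongr
        exact norm_besselCoef_mul_le hα0 (sq_norm_le_of_mem_ball_sqrt hz) m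
    _ = (α / 2 + m) / (m ! * α) * ((1 / 4) ^ m / Real.Gamma α) := by
        rw [Real.Gamma_add_one hα0.ne']
        field_simp
    _ ≤ 3 / 2 * ((1 / 4) ^ m / Real.Gamma α) := by
        gcongr ?_ * _
        rw [div_le_iff₀ (by positivity)]
        nlinarith
    _ = 3 / 2 / Real.Gamma α * (1 / 4) ^ m := by ring

lemma besselJEntire_ne_zero (hα : 0 < α) {z : ℂ} (hz : ‖z‖ ^ 2 ≤ α) : besselJEntire α z ≠ 0 := by
  have hΓ : 0 < Real.Gamma (α + 1) := Real.Gamma_pos_of_pos (by positivity)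
  have htail := (hasSum_nat_add_iff' 1).mpr (hasSum_besselJEntire hα hz)
  have hgeom : HasSum (fun m : ℕ => (1 / 4 : ℝ) ^ (m + 1) / Real.Gamma (α + 1))
      (1 / 3 / Real.Gamma (α + 1)) := by
    have h := (hasSum_geometric_of_lt_one (r := 1 / 4) (by norm_num) (by norm_num)).mul_left
      (1 / 4 / Real.Gamma (α + 1))
    rw [show 1 / 4 / Real.Gamma (α + 1) * (1 - 1 / 4)⁻¹ = 1 / 3 / Real.Gamma (α + 1) by ring] at h
    exact h.congr_fun fun m => by ring
  have hbound := htail.norm_le_of_bounded hgeom fun m => norm_besselCoef_mul_pow_le hα hz (m + 1)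
  intro h0
  rw [h0, Finset.sum_range_one, mul_zero, pow_zero, mul_one, zero_sub, norm_neg,
    norm_besselCoef hα 0] at hbound
  simp only [Nat.factorial_zero, Nat.cast_one, Nat.cast_zero, zero_add, one_mul] at hbound
  rw [div_le_div_iff_of_pos_right hΓ] at hbound
  norm_num at hbound

lemma hasDerivAt_besselJ (hα : 0 < α) {z D : ℂ} (hz : z ∈ Metric.ball 0 √α)
    (hD : HasDerivAt (fun w : ℂ => (w / 2) ^ (α : ℂ)) D z) :
    HasDerivAt (besselJ α)
      (D * besselJEntire α z + (z / 2) ^ (α : ℂ) * deriv (besselJEntire α) z) z := by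
  rw [funext (besselJ_eq_cpow_mul hα)]
  exact hD.mul (differentiableAt_besselJEntire hα hz).hasDerivAt

lemma hasDerivAt_besselJ_zero (hα : 1 < α) : HasDerivAt (besselJ α) 0 0 := by
  have hD := (hasDerivAt_cpow_ofReal_zero hα).comp_of_eq 0 ((hasDerivAt_id' (0 : ℂ)).div_const 2)
    (zero_div 2).symm
  have hJ := hasDerivAt_besselJ (by linarith)
    (Metric.mem_ball_self (Real.sqrt_pos.mpr (by linarith))) hD
  rwa [zero_mul, zero_mul, zero_div, zero_cpow (ofReal_ne_zero.mpr (by linarith)), zero_mul,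
    add_zero] at hJ

lemma continuousAt_cpow_of_differentiableAt_besselJ (hα : 0 < α) {z : ℂ}
    (hz : z ∈ Metric.ball 0 √α) (h : DifferentiableAt ℂ (besselJ α) z) :
    ContinuousAt (fun w : ℂ => w ^ (α : ℂ)) (z / 2) := by
  have hG := (differentiableAt_besselJEntire hα hz).continuousAt
  have hG0 := besselJEntire_ne_zero hα (sq_norm_le_of_mem_ball_sqrt hz)
  have hquot : ContinuousAt (fun w : ℂ => (w / 2) ^ (α : ℂ)) z := by
    refine (h.continuousAt.div hG hG0).congr ?_
    filter_upwards [hG.eventually_ne hG0] with w hw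
    rw [Pi.div_apply, besselJ_eq_cpow_mul hα, mul_div_cancel_right₀ _ hw]
  have := hquot.comp_of_eq ((continuous_const_mul (2 : ℂ)).continuousAt (x := z / 2)) (by ring)
  simpa [Function.comp_def] using this

lemma norm_deriv_besselJ_le (hα : 1 ≤ α) {z : ℂ} (hz : z ∈ Metric.ball 0 √α) (hz0 : z ≠ 0) :
    ‖deriv (besselJ α) z‖ ≤ 2 * (‖z‖ / 2) ^ (α - 1) / Real.Gamma α := by
  have hα0 : 0 < α := by linarith
  by_cases hJ : DifferentiableAt ℂ (besselJ α) z
  swap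
  · rw [deriv_zero_of_not_differentiableAt hJ, norm_zero]
    have := Real.Gamma_pos_of_pos hα0
    positivity
  have hz2 : z / 2 ≠ 0 := div_ne_zero hz0 two_ne_zero
  have hcpow := hasDerivAt_cpow_const_of_mem_slitPlane_or_int hz2
    (mem_slitPlane_or_exists_int_of_continuousAt_cpow_const hz2
      (continuousAt_cpow_of_differentiableAt_besselJ hα0 hz hJ))
  have hsplit : (z / 2) ^ (α : ℂ) = (z / 2) ^ ((α : ℂ) - 1) * (z / 2) := by
    rw [cpow_sub _ _ hz2, cpow_one, div_mul_cancel₀ _ hz2]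
  have hnorm : ‖(z / 2) ^ ((α : ℂ) - 1)‖ = (‖z‖ / 2) ^ (α - 1) := by
    rw [show (α : ℂ) - 1 = ((α - 1 : ℝ) : ℂ) by push_cast; rfl, norm_cpow_real, norm_div,
      Complex.norm_two]
  have hD := hcpow.comp z ((hasDerivAt_id' z).div_const 2)
  rw [(hasDerivAt_besselJ hα0 hz hD).deriv]
  calc ‖α * (z / 2) ^ ((α : ℂ) - 1) * (1 / 2) * besselJEntire α z
        + (z / 2) ^ (α : ℂ) * deriv (besselJEntire α) z‖
      = (‖z‖ / 2) ^ (α - 1) * ‖α / 2 * besselJEntire α z + z / 2 * deriv (besselJEntire α) z‖ := by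
        rw [hsplit, ← hnorm, ← norm_mul]
        congr 1
        ring
    _ ≤ (‖z‖ / 2) ^ (α - 1) * (2 / Real.Gamma α) := by
        gcongr
        exact norm_besselJEntire_add_deriv_le hα hz
    _ = 2 * (‖z‖ / 2) ^ (α - 1) / Real.Gamma α := by ring

end

theorem stmt_5_general (ρ : ℝ) (d n : ℕ) (hd : 2 ≤ d)
    (hn : 10 * (ρ + 1) ^ 2 ≤ (n : ℝ)) (z : ℂ) (hz : ‖z‖ ≤ ρ)
    (α : ℝ) (hα : α = (n : ℝ) + ((d : ℝ) - 2) / 2) :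
    ‖deriv (besselJ α) z‖ ≤ 3 * (‖z‖ / 2) ^ (α - 1) / Real.Gamma α := by
  have hnα : (n : ℝ) ≤ α := by
    have : (2 : ℝ) ≤ d := mod_cast hd
    rw [hα]
    linarith
  have hρ : 0 ≤ ρ := (norm_nonneg z).trans hz
  have hα1 : 1 < α := by nlinarith
  have hzα : z ∈ Metric.ball 0 √α := by
    rw [mem_ball_zero_iff, Real.lt_sqrt (norm_nonneg z)]
    nlinarith [norm_nonneg z]
  rcases eq_or_ne z 0 with rfl | hz0
  · rw [(hasDerivAt_besselJ_zero hα1).deriv, norm_zero, zero_div,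
      Real.zero_rpow (by linarith), mul_zero, zero_div]
  · have hΓ := Real.Gamma_pos_of_pos (zero_lt_one.trans hα1)
    calc ‖deriv (besselJ α) z‖ ≤ 2 * (‖z‖ / 2) ^ (α - 1) / Real.Gamma α :=
          norm_deriv_besselJ_le hα1.le hzα hz0
      _ ≤ 3 * (‖z‖ / 2) ^ (α - 1) / Real.Gamma α := by gcongr; norm_num

/-- Bessel estimate (5.16): for `|z| ≤ ρ`, `α = n + (d−2)/2`, `d ≥ 2`,
`n ≥ 10(ρ+1)²`, one has `|J'_α(z)| ≤ 3 (|z|/2)^{α−1}/Γ(α)`. -/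
theorem stmt_5 (ρ : ℝ) (hρ : 0 < ρ) (d n : ℕ) (hd : 2 ≤ d)
    (hn : 10 * (ρ + 1) ^ 2 ≤ (n : ℝ)) (z : ℂ) (hz : ‖z‖ ≤ ρ)
    (α : ℝ) (hα : α = (n : ℝ) + ((d : ℝ) - 2) / 2) :
    ‖deriv (besselJ α) z‖ ≤ 3 * (‖z‖ / 2) ^ (α - 1) / Real.Gamma α :=
  stmt_5_general ρ d n hd hn z hz α hα
end
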